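/- arXiv:1210.0951 — 2 statements merged into one kernel-verified Lean document; each statement's English description precedes it below -/
import Mathlib

section
/- Let S be a metric space, μ and (ν_{n,i}) Borel probability measures on S (i ranging over index sets I_n). The following are equivalent: (a) for every closed B, limsup_n sup_i ν_{n,i}(B) ≤ μ(B); (b) for every Borel A with μ(∂A) = 0, lim_n sup_i |ν_{n,i}(A) - μ(A)| = 0. -/
open MeasureTheory Filter
open scoped ENNReal

lemma stmt12_aux_closure {S : Type*} [TopologicalSpace S] [MeasurableSpace S]
    (μ : Measure S) (A : Set S) (hfr : μ (frontier A) = 0) :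
    μ (closure A) = μ A := by
  refine le_antisymm ?_ (measure_mono subset_closure)
  calc μ (closure A) ≤ μ (A ∪ frontier A) := by
        refine measure_mono ?_
        rw [closure_eq_self_union_frontier]
    _ ≤ μ A + μ (frontier A) := measure_union_le _ _
    _ = μ A := by rw [hfr, add_zero]

lemma stmt12_aux_interior {S : Type*} [TopologicalSpace S] [MeasurableSpace S]
    (μ : Measure S) (A : Set S) (hfr : μ (frontier A) = 0) :
    μ (interior A) = μ A := by
  refine le_antisymm (measure_mono interior_subset) ?_
  calc μ A ≤ μ (interior A ∪ frontier A) := by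
        refine measure_mono ?_
        rw [← closure_eq_interior_union_frontier]
        exact subset_closure
    _ ≤ μ (interior A) + μ (frontier A) := measure_union_le _ _
    _ = μ (interior A) := by rw [hfr, add_zero]

/-- uniform-in-`i` Portmanteau equivalence: `(a)` for every closed `B`,
`limsup_n sup_i ν_{n,i}(B) ≤ μ(B)`, iff `(b)` for every Borel `A` with `μ(∂A) = 0`,
`lim_n sup_i |ν_{n,i}(A) - μ(A)| = 0`. -/
theorem stmt12 {S : Type*} [MetricSpace S] [MeasurableSpace S] [BorelSpace S]
    {ι : ℕ → Type*} (ν : (n : ℕ) → ι n → Measure S) (μ : Measure S)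
    [∀ n i, IsProbabilityMeasure (ν n i)] [IsProbabilityMeasure μ] :
    (∀ B : Set S, IsClosed B →
        limsup (fun n => ⨆ i : ι n, ν n i B) atTop ≤ μ B)
      ↔ (∀ A : Set S, MeasurableSet A → μ (frontier A) = 0 →
        Tendsto (fun n => ⨆ i : ι n, |(ν n i A).toReal - (μ A).toReal|)
          atTop (nhds 0)) := by
  constructor
  · -- (a) → (b)
    intro ha A hA hfr
    have μcl : μ (closure A) = μ A := stmt12_aux_closure μ A hfr
    have μint : μ (interior A) = μ A := stmt12_aux_interior μ A hfr
    rw [NormedAddCommGroup.tendsto_nhds_zero]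
    intro ε hε
    have hε2 : (0:ℝ) < ε / 2 := by linarith
    set e : ℝ≥0∞ := ENNReal.ofReal (ε / 2) with he
    have he_pos : 0 < e := ENNReal.ofReal_pos.mpr hε2
    -- apply (a) to closure A and closure Aᶜ
    have frc : frontier Aᶜ = frontier A := frontier_compl A
    have h1 : limsup (fun n => ⨆ i : ι n, ν n i (closure A)) atTop < μ (closure A) + e :=
      lt_of_le_of_lt (ha _ isClosed_closure)
        (ENNReal.lt_add_right (measure_ne_top μ _) he_pos.ne')
    have h2 : limsup (fun n => ⨆ i : ι n, ν n i (closure Aᶜ)) atTop < μ (closure Aᶜ) + e :=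
      lt_of_le_of_lt (ha _ isClosed_closure)
        (ENNReal.lt_add_right (measure_ne_top μ _) he_pos.ne')
    have ev1 := eventually_lt_of_limsup_lt h1
    have ev2 := eventually_lt_of_limsup_lt h2
    filter_upwards [ev1, ev2] with n hn1 hn2
    -- pointwise bound for each i
    have hbound : ∀ i : ι n, |(ν n i A).toReal - (μ A).toReal| ≤ ε / 2 := by
      intro i
      have hub : ν n i (closure A) < μ (closure A) + e :=
        lt_of_le_of_lt (le_iSup (fun j => ν n j (closure A)) i) hn1
      have hlb : ν n i (closure Aᶜ) < μ (closure Aᶜ) + e :=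
        lt_of_le_of_lt (le_iSup (fun j => ν n j (closure Aᶜ)) i) hn2
      have hfin : μ (closure A) + e ≠ ∞ := by
        refine ENNReal.add_ne_top.mpr ⟨measure_ne_top μ _, ENNReal.ofReal_ne_top⟩
      have hfin' : μ (closure Aᶜ) + e ≠ ∞ := by
        refine ENNReal.add_ne_top.mpr ⟨measure_ne_top μ _, ENNReal.ofReal_ne_top⟩
      -- upper bound in reals
      have hub' : (ν n i A).toReal ≤ (μ A).toReal + ε / 2 := by
        have h0 : ν n i A ≤ μ (closure A) + e :=
          le_trans (measure_mono subset_closure) hub.le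
        have := ENNReal.toReal_mono hfin h0
        rwa [ENNReal.toReal_add (measure_ne_top μ _) ENNReal.ofReal_ne_top, μcl,
          ENNReal.toReal_ofReal hε2.le] at this
      -- lower bound in reals
      have hcompl : (closure Aᶜ)ᶜ = interior A := by
        rw [← interior_compl, compl_compl]
      have hν_int : (ν n i (interior A)).toReal = 1 - (ν n i (closure Aᶜ)).toReal := by
        rw [← hcompl, measure_compl isClosed_closure.measurableSet (measure_ne_top _ _),
          measure_univ, ENNReal.toReal_sub_of_le prob_le_one ENNReal.one_ne_top,
          ENNReal.toReal_one]
      have hμ_ccompl : (μ (closure Aᶜ)).toReal = 1 - (μ A).toReal := by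
        have hc2 : closure Aᶜ = (interior A)ᶜ := by rw [← hcompl, compl_compl]
        rw [hc2, prob_compl_eq_one_sub isOpen_interior.measurableSet, μint,
          ENNReal.toReal_sub_of_le prob_le_one ENNReal.one_ne_top, ENNReal.toReal_one]
      have hlb' : (μ A).toReal - ε / 2 ≤ (ν n i A).toReal := by
        have h0 : (ν n i (closure Aᶜ)).toReal ≤ (μ (closure Aᶜ)).toReal + ε / 2 := by
          have := ENNReal.toReal_mono hfin' hlb.le
          rwa [ENNReal.toReal_add (measure_ne_top μ _) ENNReal.ofReal_ne_top,
            ENNReal.toReal_ofReal hε2.le] at this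
        have h1 : (ν n i (interior A)).toReal ≤ (ν n i A).toReal :=
          ENNReal.toReal_mono (measure_ne_top _ _) (measure_mono interior_subset)
        rw [hν_int] at h1
        rw [hμ_ccompl] at h0
        linarith
      rw [abs_le]
      constructor <;> linarith
    have hnonneg : 0 ≤ ⨆ i : ι n, |(ν n i A).toReal - (μ A).toReal| :=
      Real.iSup_nonneg (fun i => abs_nonneg _)
    have hsup : (⨆ i : ι n, |(ν n i A).toReal - (μ A).toReal|) ≤ ε / 2 :=
      Real.iSup_le hbound hε2.le
    rw [Real.norm_eq_abs, abs_of_nonneg hnonneg]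
    linarith
  · -- (b) → (a)
    intro hb B hB
    obtain ⟨rs, hrs_lim, hrs⟩ := exists_null_frontiers_thickening μ B
    set T : ℕ → Set S := fun k => Metric.thickening (rs k) B with hT
    have key : ∀ k, limsup (fun n => ⨆ i : ι n, ν n i B) atTop ≤ μ (T k) := by
      intro k
      refine ENNReal.le_of_forall_pos_le_add (fun ε hε hlt => ?_)
      have htend := hb (T k) Metric.isOpen_thickening.measurableSet (hrs k).2
      have hev : ∀ᶠ n in atTop,
          (⨆ i : ι n, |(ν n i (T k)).toReal - (μ (T k)).toReal|) < (ε : ℝ) :=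
        htend.eventually (gt_mem_nhds (by exact_mod_cast hε))
      refine Filter.limsup_le_of_le (by isBoundedDefault) ?_
      filter_upwards [hev] with n hn
      refine iSup_le (fun i => ?_)
      have hsub : ν n i B ≤ ν n i (T k) :=
        measure_mono (Metric.self_subset_thickening (hrs k).1 B)
      have hbdd : BddAbove (Set.range fun i : ι n =>
          |(ν n i (T k)).toReal - (μ (T k)).toReal|) := by
        refine ⟨1, ?_⟩
        rintro x ⟨j, rfl⟩
        have h1 : (ν n j (T k)).toReal ≤ 1 := by
          simpa using ENNReal.toReal_mono ENNReal.one_ne_top (prob_le_one (μ := ν n j))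
        have h2 : (μ (T k)).toReal ≤ 1 := by
          simpa using ENNReal.toReal_mono ENNReal.one_ne_top (prob_le_one (μ := μ))
        have h3 : 0 ≤ (ν n j (T k)).toReal := ENNReal.toReal_nonneg
        have h4 : 0 ≤ (μ (T k)).toReal := ENNReal.toReal_nonneg
        rw [abs_le]; constructor <;> linarith
      have hi : |(ν n i (T k)).toReal - (μ (T k)).toReal| < (ε : ℝ) :=
        lt_of_le_of_lt (le_ciSup hbdd i) hn
      have hi' : (ν n i (T k)).toReal ≤ (μ (T k)).toReal + (ε : ℝ) := by
        have := abs_sub_le_iff.mp hi.le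
        linarith [this.1]
      calc ν n i B ≤ ν n i (T k) := hsub
        _ = ENNReal.ofReal ((ν n i (T k)).toReal) := (ENNReal.ofReal_toReal (measure_ne_top _ _)).symm
        _ ≤ ENNReal.ofReal ((μ (T k)).toReal + (ε : ℝ)) := ENNReal.ofReal_le_ofReal hi'
        _ = μ (T k) + (ε : ℝ≥0∞) := by
            rw [ENNReal.ofReal_add ENNReal.toReal_nonneg ε.coe_nonneg,
              ENNReal.ofReal_toReal (measure_ne_top _ _), ENNReal.ofReal_coe_nnreal]
    have hμT : Tendsto (fun k => μ (T k)) atTop (nhds (μ B)) := by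
      have h1 : Tendsto (fun r => μ (Metric.thickening r B)) (nhdsWithin 0 (Set.Ioi 0))
          (nhds (μ B)) :=
        tendsto_measure_thickening_of_isClosed ⟨1, one_pos, measure_ne_top μ _⟩ hB
      have h2 : Tendsto rs atTop (nhdsWithin 0 (Set.Ioi 0)) := by
        refine tendsto_nhdsWithin_of_tendsto_nhds_of_eventually_within _ hrs_lim ?_
        exact Eventually.of_forall (fun k => (hrs k).1)
      exact h1.comp h2
    exact ge_of_tendsto' hμT key
end

section
/- Let S be a metric space, μ and (ν_{n,i}) Borel probability measures on S. Suppose that for every closed set B, limsup_n sup_i ν_{n,i}(B) ≤ μ(B). Then for every bounded continuous F : S → ℝ, lim_n sup_i |∫ F dν_{n,i} - ∫ F dμ| = 0. -/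
open MeasureTheory Filter
open scoped ENNReal

/-- Auxiliary: the closed-set limsup condition implies convergence of integrals of bounded
continuous functions, for a sequence of probability measures. -/
lemma stmt13_aux {S : Type*} [MetricSpace S] [MeasurableSpace S] [BorelSpace S]
    (m : ℕ → Measure S) (μ : Measure S) [∀ n, IsProbabilityMeasure (m n)]
    [IsProbabilityMeasure μ]
    (h : ∀ B : Set S, IsClosed B → limsup (fun n => m n B) atTop ≤ μ B)
    (f : BoundedContinuousFunction S ℝ) :
    Tendsto (fun n => ∫ s, f s ∂(m n)) atTop (nhds (∫ s, f s ∂μ)) := by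
  have h_opens : ∀ G, IsOpen G → μ G ≤ atTop.liminf (fun n => m n G) :=
    limsup_measure_closed_le_iff_liminf_measure_open_ge.mp (fun B hB => h B hB)
  let P : ℕ → ProbabilityMeasure S := fun n => ⟨m n, inferInstance⟩
  let Q : ProbabilityMeasure S := ⟨μ, inferInstance⟩
  have h_opens' : ∀ G, IsOpen G → Q G ≤ atTop.liminf (fun n => P n G) := by
    intro G hG
    have aux : ENNReal.ofNNReal (liminf (fun n => P n G) atTop) =
        liminf (ENNReal.ofNNReal ∘ fun n => P n G) atTop := by
      refine Monotone.map_liminf_of_continuousAt (F := atTop) ENNReal.coe_mono (P · G) ?_ ?_ ?_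
      · exact ENNReal.continuous_coe.continuousAt
      · exact IsBoundedUnder.isCoboundedUnder_ge ⟨1, by simp⟩
      · exact ⟨0, by simp⟩
    have obs := h_opens G hG
    rw [← ENNReal.coe_le_coe, aux]
    simp only [Q, P, Function.comp_def,
      ProbabilityMeasure.ennreal_coeFn_eq_coeFn_toMeasure]
    simpa [ENNReal.coe_toNNReal, measure_ne_top] using obs
  have key := MeasureTheory.tendsto_of_forall_isOpen_le_liminf h_opens'
  exact ProbabilityMeasure.tendsto_iff_forall_integral_tendsto.mp key f

/-- uniform-in-`i` Portmanteau implication: if for every closed `B`,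
`limsup_n sup_i ν_{n,i}(B) ≤ μ(B)`, then for every bounded continuous `F : S → ℝ`,
`lim_n sup_i |∫ F dν_{n,i} - ∫ F dμ| = 0`. -/
theorem stmt13 {S : Type*} [MetricSpace S] [MeasurableSpace S] [BorelSpace S]
    {ι : ℕ → Type*} (ν : (n : ℕ) → ι n → Measure S) (μ : Measure S)
    [∀ n i, IsProbabilityMeasure (ν n i)] [IsProbabilityMeasure μ]
    (h : ∀ B : Set S, IsClosed B →
      limsup (fun n => ⨆ i : ι n, ν n i B) atTop ≤ μ B) :
    ∀ F : S → ℝ, Continuous F → (∃ M : ℝ, ∀ s, |F s| ≤ M) →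
      Tendsto (fun n => ⨆ i : ι n, |(∫ s, F s ∂(ν n i)) - ∫ s, F s ∂μ|)
        atTop (nhds 0) := by
  intro F hF ⟨M, hM⟩
  -- choose near-optimal indices
  have key : ∀ n : ℕ, ∃ m : Measure S, IsProbabilityMeasure m ∧
      (⨆ i : ι n, |(∫ s, F s ∂(ν n i)) - ∫ s, F s ∂μ|)
        ≤ |(∫ s, F s ∂m) - ∫ s, F s ∂μ| + 1 / (n + 1) ∧
      ∀ B : Set S, m B ≤ (⨆ i : ι n, ν n i B) ⊔ μ B := by
    intro n
    have hpos : (0 : ℝ) < 1 / (n + 1) := by positivity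
    by_cases hne : Nonempty (ι n)
    · set c := ⨆ i : ι n, |(∫ s, F s ∂(ν n i)) - ∫ s, F s ∂μ| with hc
      obtain ⟨i, hi⟩ := exists_lt_of_lt_ciSup (f := fun i : ι n =>
        |(∫ s, F s ∂(ν n i)) - ∫ s, F s ∂μ|) (show c - 1 / (n + 1) < c from by linarith)
      refine ⟨ν n i, inferInstance, by linarith, fun B => ?_⟩
      exact le_sup_of_le_left (le_iSup (fun i : ι n => ν n i B) i)
    · rw [not_nonempty_iff] at hne
      refine ⟨μ, inferInstance, ?_, fun B => le_sup_right⟩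
      rw [iSup_of_empty']
      simp only [Real.sSup_empty, sub_self, abs_zero, zero_add]
      exact hpos.le
  choose m hm1 hm2 hm3 using key
  haveI : ∀ n, IsProbabilityMeasure (m n) := hm1
  -- the chosen sequence satisfies the closed-set limsup condition
  have hclosed : ∀ B : Set S, IsClosed B → limsup (fun n => m n B) atTop ≤ μ B := by
    intro B hB
    calc limsup (fun n => m n B) atTop
        ≤ limsup (fun n => μ B ⊔ ⨆ i : ι n, ν n i B) atTop := by
          apply limsup_le_limsup (Eventually.of_forall fun n => ?_)
          rw [sup_comm]; exact hm3 n B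
      _ = μ B ⊔ limsup (fun n => ⨆ i : ι n, ν n i B) atTop := (sup_limsup _).symm
      _ ≤ μ B ⊔ μ B := sup_le_sup_left (h B hB) _
      _ = μ B := sup_idem _
  -- package F as a bounded continuous function
  let f : BoundedContinuousFunction S ℝ := BoundedContinuousFunction.mkOfBound ⟨F, hF⟩ (2 * M) (fun x y => by
    have := hM x; have := hM y
    simp only [Real.dist_eq, ContinuousMap.coe_mk]
    calc |F x - F y| ≤ |F x| + |F y| := abs_sub _ _
      _ ≤ 2 * M := by linarith)
  have hf : ∀ (κ : Measure S), ∫ s, f s ∂κ = ∫ s, F s ∂κ := fun κ => rfl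
  have hconv : Tendsto (fun n => ∫ s, F s ∂(m n)) atTop (nhds (∫ s, F s ∂μ)) := by
    simpa only [hf] using stmt13_aux m μ hclosed f
  -- squeeze
  have habs : Tendsto (fun n => |(∫ s, F s ∂(m n)) - ∫ s, F s ∂μ| + 1 / ((n : ℝ) + 1))
      atTop (nhds 0) := by
    have h1 : Tendsto (fun n => |(∫ s, F s ∂(m n)) - ∫ s, F s ∂μ|) atTop (nhds 0) := by
      have := (hconv.sub (tendsto_const_nhds (x := ∫ s, F s ∂μ))).abs
      simpa using this
    have h2 := tendsto_one_div_add_atTop_nhds_zero_nat (𝕜 := ℝ)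
    simpa using h1.add h2
  refine squeeze_zero (fun n => Real.iSup_nonneg fun i => abs_nonneg _) (fun n => ?_) habs
  exact hm2 n
end
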